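/- Let a_1, …, a_K ∈ ℝ^n and let α_1, …, α_K ≥ 0 satisfy ∑_{i=1}^K α_i = 1 and ∑_{i=1}^K α_i a_i = 0. Suppose M > 0 is such that ‖a_i − a_j‖_4^4 ≤ M^4 for all i ≠ j. Then (1 − ∑_{i=1}^K α_i^2)·M^4 ≥ 2·∑_{m=1}^n ∑_{i=1}^K α_i a_{i,m}^4 + 6·∑_{m=1}^n (∑_{i=1}^K α_i a_{i,m}^2)^2, where a_{i,m} denotes the m-th coordinate of a_i. -/
import Mathlib


open Finset

lemma expand_aux {K : ℕ} (α x : Fin K → ℝ) :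
    ∑ i, ∑ j, α i * α j * (x i - x j) ^ 4 =
      2 * (∑ i, α i) * (∑ i, α i * x i ^ 4)
        - 8 * (∑ i, α i * x i ^ 3) * (∑ i, α i * x i)
        + 6 * (∑ i, α i * x i ^ 2) ^ 2 := by
  have h : ∀ i j, α i * α j * (x i - x j) ^ 4 =
      (α i * x i ^ 4) * (α j) - (4 * (α i * x i ^ 3)) * (α j * x j)
        + (6 * (α i * x i ^ 2)) * (α j * x j ^ 2)
        - (4 * (α i * x i)) * (α j * x j ^ 3) + (α i) * (α j * x j ^ 4) := by
    intro i j; ring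
  simp only [h]
  simp only [Finset.sum_add_distrib, Finset.sum_sub_distrib]
  simp only [← Finset.mul_sum, ← Finset.sum_mul]
  ring

/-- **Inequality (5) from the proof.** If `α₁,…,α_K ≥ 0` sum to 1, `∑ αᵢ aᵢ = 0`, and
`‖aᵢ - aⱼ‖₄⁴ ≤ M⁴` for all `i ≠ j`, then
`(1 - ∑ αᵢ²)·M⁴ ≥ 2·∑_m ∑_i αᵢ a_{i,m}⁴ + 6·∑_m (∑_i αᵢ a_{i,m}²)²`. -/
theorem stmt10 (n K : ℕ) (a : Fin K → Fin n → ℝ) (α : Fin K → ℝ)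
    (hα : ∀ i, 0 ≤ α i) (hsum : ∑ i, α i = 1)
    (hbary : ∑ i, α i • a i = 0)
    (M : ℝ) (hM : 0 < M)
    (hdist : ∀ i j, i ≠ j → (∑ m, (a i m - a j m) ^ 4) ≤ M ^ 4) :
    2 * (∑ m, ∑ i, α i * (a i m) ^ 4) + 6 * (∑ m, (∑ i, α i * (a i m) ^ 2) ^ 2) ≤
      (1 - ∑ i, (α i) ^ 2) * M ^ 4 := by
  have h0 : ∀ m, ∑ i, α i * a i m = 0 := by
    intro m
    simpa [Finset.sum_apply, smul_eq_mul] using congrFun hbary m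
  have hm : ∀ m : Fin n, ∑ i, ∑ j, α i * α j * (a i m - a j m) ^ 4 =
      2 * (∑ i, α i * a i m ^ 4) + 6 * (∑ i, α i * a i m ^ 2) ^ 2 := by
    intro m
    rw [expand_aux α (fun i => a i m), hsum, h0 m]
    ring
  have key : ∑ i, ∑ j, α i * α j * ∑ m, (a i m - a j m) ^ 4 =
      2 * (∑ m, ∑ i, α i * (a i m) ^ 4) + 6 * (∑ m, (∑ i, α i * (a i m) ^ 2) ^ 2) := by
    calc ∑ i, ∑ j, α i * α j * ∑ m, (a i m - a j m) ^ 4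
        = ∑ i, ∑ m, ∑ j, α i * α j * (a i m - a j m) ^ 4 := by
          refine Finset.sum_congr rfl fun i _ => ?_
          simp_rw [Finset.mul_sum]
          exact Finset.sum_comm
      _ = ∑ m, ∑ i, ∑ j, α i * α j * (a i m - a j m) ^ 4 := Finset.sum_comm
      _ = ∑ m, (2 * (∑ i, α i * a i m ^ 4) + 6 * (∑ i, α i * a i m ^ 2) ^ 2) :=
          Finset.sum_congr rfl fun m _ => hm m
      _ = 2 * (∑ m, ∑ i, α i * (a i m) ^ 4) + 6 * (∑ m, (∑ i, α i * (a i m) ^ 2) ^ 2) := by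
          rw [Finset.sum_add_distrib, ← Finset.mul_sum, ← Finset.mul_sum]
  have hb : ∀ i ∈ Finset.univ, ∀ j ∈ Finset.univ,
      α i * α j * ∑ m, (a i m - a j m) ^ 4 ≤
        α i * α j * M ^ 4 - (if i = j then α i * α j * M ^ 4 else 0) := by
    intro i _ j _
    by_cases hij : i = j
    · subst hij
      simp
    · simp only [hij, if_false, sub_zero]
      exact mul_le_mul_of_nonneg_left (hdist i j hij) (mul_nonneg (hα i) (hα j))
  have e1 : ∑ i : Fin K, ∑ j : Fin K, α i * α j * M ^ 4 = M ^ 4 := by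
    simp_rw [show ∀ i j : Fin K, α i * α j * M ^ 4 = α i * (α j * M ^ 4) from
        fun i j => by ring, ← Finset.mul_sum, ← Finset.sum_mul, hsum]
    ring
  have e2 : ∑ i : Fin K, α i * α i * M ^ 4 = (∑ i, (α i) ^ 2) * M ^ 4 := by
    rw [Finset.sum_mul]
    exact Finset.sum_congr rfl fun i _ => by ring
  calc 2 * (∑ m, ∑ i, α i * (a i m) ^ 4) + 6 * (∑ m, (∑ i, α i * (a i m) ^ 2) ^ 2)
      = ∑ i, ∑ j, α i * α j * ∑ m, (a i m - a j m) ^ 4 := key.symm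
    _ ≤ ∑ i, ∑ j, (α i * α j * M ^ 4 - (if i = j then α i * α j * M ^ 4 else 0)) :=
        Finset.sum_le_sum (fun i hi => Finset.sum_le_sum (hb i hi))
    _ = (1 - ∑ i, (α i) ^ 2) * M ^ 4 := by
        simp only [Finset.sum_sub_distrib, Finset.sum_ite_eq, Finset.mem_univ, if_true]
        rw [e1, e2]
        ring
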